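/- If y is the prefix table of a regular string x, then for every positive edge (h,k) of the prefix graph of y, x[h] = x[k]; consequently all positions in the same connected component of P⁺ carry the same letter, and the endpoints of any negative edge lie in distinct components of P⁺. -/

import Mathlib

/-- `x[i..i+ℓ-1]` matches the prefix `x[1..ℓ]` of `x[1..n]` position-wise.  -/
def MatchPref {α : Type*} (x : ℕ → Finset α) (n i ℓ : ℕ) : Prop :=
  i + ℓ ≤ n + 1 ∧ ∀ h, h < ℓ → ∃ a, a ∈ x (1 + h) ∧ a ∈ x (i + h)

/-- `y` is the prefix table of the (1-indexed) string `x[1..n]`: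
for each `i ∈ 1..n`, `y i` is the length of the longest prefix of `x[i..n]`
matching a prefix of `x`. -/
def IsPrefixTable {α : Type*} (x : ℕ → Finset α) (n : ℕ) (y : ℕ → ℕ) : Prop :=
  ∀ i, 1 ≤ i → i ≤ n → MatchPref x n i (y i) ∧ ∀ ℓ, MatchPref x n i ℓ → ℓ ≤ y i

/-- A feasible array `y[1..n]`. -/
def Feasible (y : ℕ → ℕ) (n : ℕ) : Prop :=
  y 1 = n ∧ ∀ i, 2 ≤ i → i ≤ n → y i ≤ n - i + 1

/-- Positive edges of the prefix graph of `y[1..n]`. -/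
def posEdges (y : ℕ → ℕ) (n : ℕ) : Finset (Sym2 ℕ) :=
  (Finset.Icc 2 n).biUnion fun i => (Finset.Icc 1 (y i)).image fun h => s(h, i + h - 1)

/-- Negative edges of the prefix graph of `y[1..n]`. -/
def negEdges (y : ℕ → ℕ) (n : ℕ) : Finset (Sym2 ℕ) :=
  ((Finset.Icc 2 n).filter fun i => i + y i ≤ n).image fun i => s(1 + y i, i + y i)

/-- The positive subgraph `P⁺` of the prefix graph of `y[1..n]`, as a simple graph. -/
def Pplus (y : ℕ → ℕ) (n : ℕ) : SimpleGraph ℕ where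
  Adj a b := a ≠ b ∧ s(a, b) ∈ posEdges y n
  symm := ⟨by
    rintro a b ⟨h1, h2⟩
    exact ⟨h1.symm, by rwa [Sym2.eq_swap]⟩⟩
  loopless := ⟨by rintro a ⟨h1, _⟩; exact h1 rfl⟩

/-!
A letter of a regular string is a singleton, so "matching" is equality. A positive edge
`(h, i + h - 1)` with `h ≤ y i` lies inside the match of `x[i..]` against the prefix of `x`,
hence its endpoints carry equal letters, and by induction along paths so does every component
of `P⁺`. A negative edge `(1 + y i, i + y i)` is exactly the first mismatch ending that match:
equal letters there would extend the match beyond the maximal length `y i`.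
-/

theorem Finset.eq_of_card_eq_one_of_mem_of_mem {α : Type*} {s t : Finset α} {a : α}
    (hs : s.card = 1) (ht : t.card = 1) (has : a ∈ s) (hat : a ∈ t) : s = t := by
  obtain ⟨b, rfl⟩ := Finset.card_eq_one.mp hs
  obtain ⟨c, rfl⟩ := Finset.card_eq_one.mp ht
  simp_all

theorem SimpleGraph.Reachable.eq_of_forall_adj {V β : Type*} {G : SimpleGraph V} {f : V → β}
    (hf : ∀ a b, G.Adj a b → f a = f b) {a b : V} (hab : G.Reachable a b) : f a = f b := by
  obtain ⟨w⟩ := hab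
  induction w with
  | nil => rfl
  | cons hadj _ ih => exact (hf _ _ hadj).trans ih

theorem Pplus.eq_of_adj {β : Type*} {y : ℕ → ℕ} {n : ℕ} {f : ℕ → β}
    (hf : ∀ i h, 2 ≤ i → i ≤ n → 1 ≤ h → h ≤ y i → f h = f (i + h - 1))
    {a b : ℕ} (hab : (Pplus y n).Adj a b) : f a = f b := by
  obtain ⟨-, hmem⟩ := hab
  simp only [posEdges, Finset.mem_biUnion, Finset.mem_image, Finset.mem_Icc] at hmem
  obtain ⟨i, ⟨hi2, hin⟩, h, ⟨h1, hh⟩, hedge⟩ := hmem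
  rcases Sym2.eq_iff.mp hedge with ⟨rfl, rfl⟩ | ⟨rfl, rfl⟩
  · exact hf i h hi2 hin h1 hh
  · exact (hf i h hi2 hin h1 hh).symm

section PrefixTable

variable {α : Type*} {x : ℕ → Finset α} {n : ℕ}

def IsRegularString (x : ℕ → Finset α) (n : ℕ) : Prop :=
  ∀ i, 1 ≤ i → i ≤ n → (x i).card = 1

theorem MatchPref.succ {i ℓ : ℕ} (hm : MatchPref x n i ℓ) (hle : i + ℓ ≤ n) {a : α}
    (ha₁ : a ∈ x (1 + ℓ)) (ha₂ : a ∈ x (i + ℓ)) : MatchPref x n i (ℓ + 1) := by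
  refine ⟨by omega, fun h hh => ?_⟩
  rcases Nat.lt_succ_iff_lt_or_eq.mp hh with hlt | rfl
  · exact hm.2 h hlt
  · exact ⟨a, ha₁, ha₂⟩

variable {y : ℕ → ℕ}

theorem IsPrefixTable.eq_of_le (hpt : IsPrefixTable x n y) (hreg : IsRegularString x n)
    {i h : ℕ} (hi : 1 ≤ i) (hin : i ≤ n) (h1 : 1 ≤ h) (hh : h ≤ y i) :
    x h = x (i + h - 1) := by
  obtain ⟨⟨hlen, hm⟩, -⟩ := hpt i hi hin
  obtain ⟨a, ha₁, ha₂⟩ := hm (h - 1) (by omega)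
  rw [show 1 + (h - 1) = h by omega] at ha₁
  rw [show i + (h - 1) = i + h - 1 by omega] at ha₂
  exact Finset.eq_of_card_eq_one_of_mem_of_mem (hreg h h1 (by omega))
    (hreg (i + h - 1) (by omega) (by omega)) ha₁ ha₂

theorem IsPrefixTable.ne_of_add_le (hpt : IsPrefixTable x n y) (hreg : IsRegularString x n)
    {i : ℕ} (hi : 1 ≤ i) (hin : i ≤ n) (hle : i + y i ≤ n) :
    x (1 + y i) ≠ x (i + y i) := by
  intro heq
  obtain ⟨hm, hmax⟩ := hpt i hi hin
  obtain ⟨a, ha⟩ := Finset.card_eq_one.mp (hreg (1 + y i) (by omega) (by omega))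
  have hext := hm.succ hle (a := a) (by simp [ha]) (by simp [← heq, ha])
  exact absurd (hmax _ hext) (by omega)

end PrefixTable

theorem regular_posEdges_eq_general (n : ℕ) {α : Type*} (x : ℕ → Finset α)
    (y : ℕ → ℕ) (hreg : ∀ i, 1 ≤ i → i ≤ n → (x i).card = 1)
    (hpt : IsPrefixTable x n y) :
    (∀ i h, 2 ≤ i → i ≤ n → 1 ≤ h → h ≤ y i → x h = x (i + h - 1)) ∧
    (∀ a b, (Pplus y n).Reachable a b → x a = x b) ∧
    (∀ i, 2 ≤ i → i ≤ n → i + y i ≤ n →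
      ¬ (Pplus y n).Reachable (1 + y i) (i + y i)) := by
  have hpos : ∀ i h, 2 ≤ i → i ≤ n → 1 ≤ h → h ≤ y i → x h = x (i + h - 1) :=
    fun _ _ hi2 hin h1 hh => hpt.eq_of_le hreg (by omega) hin h1 hh
  have hcomp : ∀ a b, (Pplus y n).Reachable a b → x a = x b :=
    fun _ _ hab => hab.eq_of_forall_adj fun _ _ => Pplus.eq_of_adj hpos
  exact ⟨hpos, hcomp, fun i hi2 hin hle hab =>
    hpt.ne_of_add_le hreg (by omega) hin hle (hcomp _ _ hab)⟩

/-- If `y` is the prefix table of a regular string `x`, then the endpoints of every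
positive edge carry equal letters; hence all positions in one connected component of `P⁺`
carry the same letter, and the endpoints of every negative edge lie in distinct components. -/
theorem regular_posEdges_eq (n : ℕ) (hn : 1 ≤ n) {α : Type*} (x : ℕ → Finset α)
    (y : ℕ → ℕ) (hreg : ∀ i, 1 ≤ i → i ≤ n → (x i).card = 1)
    (hpt : IsPrefixTable x n y) :
    (∀ i h, 2 ≤ i → i ≤ n → 1 ≤ h → h ≤ y i → x h = x (i + h - 1)) ∧
    (∀ a b, (Pplus y n).Reachable a b → x a = x b) ∧
    (∀ i, 2 ≤ i → i ≤ n → i + y i ≤ n →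
      ¬ (Pplus y n).Reachable (1 + y i) (i + y i)) :=
  regular_posEdges_eq_general n x y hreg hpt
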